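/- For every α > 0 and θ > 2, there exists a square-summable coefficient array that satisfies the condition A^α_θ but does not satisfy the condition B^{α/(1+2α)}_{2,∞}. Consequently the class A^α_θ is not contained in the intersection of the classes B^{α/(1+2α)}_{2,∞} and W_{2/(1+2α)}. -/

import Mathlib

open scoped BigOperators

/-- A coefficient array `β` is square-summable if `Σ_{j,k} β_{j,k}² < ∞`. -/
def SqSummable (β : ℕ → ℕ → ℝ) : Prop :=
  Summable fun j : ℕ => ∑ k ∈ Finset.range (2 ^ j), (β j k) ^ 2

/-- The condition `B^{α/(1+2α)}_{2,∞}`. -/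
def CondB2 (β : ℕ → ℕ → ℝ) (α : ℝ) : Prop :=
  ∃ C : ℝ, ∀ J : ℕ,
    (2 : ℝ) ^ (2 * (J : ℝ) * α / (1 + 2 * α)) *
      ∑' j : ℕ, (if J ≤ j then ∑ k ∈ Finset.range (2 ^ j), (β j k) ^ 2 else 0) ≤ C

/-- The weak Besov condition `W_{2/(1+2α)}`. -/
def CondW (β : ℕ → ℕ → ℝ) (α : ℝ) : Prop :=
  ∃ C : ℝ, ∀ u : ℝ, 0 < u →
    {q : ℕ × ℕ | q.2 < 2 ^ q.1 ∧ u < |β q.1 q.2|}.Finite ∧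
      u ^ (2 / (1 + 2 * α)) *
        ({q : ℕ × ℕ | q.2 < 2 ^ q.1 ∧ u < |β q.1 q.2|}.ncard : ℝ) ≤ C

/-- `N(J,j) = min(⌊2^J (j−J+1)^{−θ}⌋, 2^j)`. -/
noncomputable def NJj (θ : ℝ) (J j : ℕ) : ℕ :=
  min ⌊(2 : ℝ) ^ J * ((j : ℝ) - (J : ℝ) + 1) ^ (-θ)⌋₊ (2 ^ j)

/-- `t_{j,J}(β)`: the minimum over subsets `A` of `{0,…,2^j−1}` of cardinality `N(J,j)`
of `Σ_{k ∉ A} β_{j,k}²`, i.e. the sum of squares of all but the `N(J,j)` largest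
`|β_{j,k}|` at level `j`. -/
noncomputable def tTail (β : ℕ → ℕ → ℝ) (θ : ℝ) (J j : ℕ) : ℝ :=
  sInf {x : ℝ | ∃ A : Finset ℕ, A ⊆ Finset.range (2 ^ j) ∧ A.card = NJj θ J j ∧
    x = ∑ k ∈ Finset.range (2 ^ j) \ A, (β j k) ^ 2}

/-- The condition `A^α_θ`. -/
def CondA (β : ℕ → ℕ → ℝ) (α θ : ℝ) : Prop :=
  ∃ C : ℝ, ∀ J : ℕ,
    (2 : ℝ) ^ (2 * (J : ℝ) * α) *
      ∑' j : ℕ, (if J ≤ j then tTail β θ J j else 0) ≤ C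


/-!
Take a single nonzero coefficient per level, `β_{j,0} = 2^{-cj/2}` with `c = α/(1+2α)`.
The energy beyond level `J` is of order `2^{-cJ}`, so the `B^{α/(1+2α)}_{2,∞}` quantity grows
like `2^{cJ}`. On the other hand `t_{j,J}(β)` vanishes as soon as `N(J,j) ≥ 1`, that is for
`j - J + 1 ≤ 2^{J/θ}`, so the `A^α_θ` sum starts only at level `J + ⌊2^{J/θ}⌋`; its size
`2^{-c 2^{J/θ}}` beats the factor `2^{2Jα}` because exponentials dominate linear functions.
-/

open Finset

lemma summable_ite_le_geometric {r : ℝ} (h0 : 0 ≤ r) (h1 : r < 1) (M : ℕ) :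
    Summable fun j : ℕ => if M ≤ j then r ^ j else 0 := by
  refine ((summable_geometric_of_lt_one h0 h1).indicator (Set.Ici M)).congr fun j => ?_
  simp [Set.indicator_apply]

lemma tsum_ite_le_geometric {r : ℝ} (h0 : 0 ≤ r) (h1 : r < 1) (M : ℕ) :
    ∑' j : ℕ, (if M ≤ j then r ^ j else 0) = r ^ M * (1 - r)⁻¹ := by
  have hsplit := (summable_ite_le_geometric h0 h1 M).sum_add_tsum_nat_add M
  have hhead : ∑ i ∈ range M, (if M ≤ i then r ^ i else 0) = 0 :=
    sum_eq_zero fun i hi => if_neg (Nat.not_le.2 (mem_range.1 hi))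
  have htail : ∀ i : ℕ, (if M ≤ i + M then r ^ (i + M) else 0) = r ^ i * r ^ M := fun i => by
    rw [if_pos (Nat.le_add_left M i), pow_add]
  rw [← hsplit, hhead, zero_add, tsum_congr htail, tsum_mul_right,
    tsum_geometric_of_lt_one h0 h1, mul_comm]

lemma exists_mul_le_mul_exp_add (a : ℝ) {b κ : ℝ} (hb : 0 < b) (hκ : 0 < κ) :
    ∃ D : ℝ, ∀ x : ℝ, 0 ≤ x → a * x ≤ b * Real.exp (κ * x) + D := by
  refine ⟨a ^ 2 / (2 * b * κ ^ 2), fun x hx => ?_⟩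
  have hexp : (κ * x) ^ 2 / 2 ≤ Real.exp (κ * x) := by
    simpa using Real.pow_div_factorial_le_exp (κ * x) (by positivity) 2
  have hquad : a * x ≤ b * ((κ * x) ^ 2 / 2) + a ^ 2 / (2 * b * κ ^ 2) := by
    rw [← sub_nonneg]
    have key : b * ((κ * x) ^ 2 / 2) + a ^ 2 / (2 * b * κ ^ 2) - a * x
        = (b * κ ^ 2 * x - a) ^ 2 / (2 * b * κ ^ 2) := by
      field_simp
      ring
    rw [key]
    positivity
  nlinarith

section tTail

variable (β : ℕ → ℕ → ℝ) (θ : ℝ) (J j : ℕ)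

lemma tTail_le_sum_sdiff {A : Finset ℕ} (hA : A ⊆ range (2 ^ j)) (hcard : A.card = NJj θ J j) :
    tTail β θ J j ≤ ∑ k ∈ range (2 ^ j) \ A, β j k ^ 2 := by
  refine csInf_le ⟨0, ?_⟩ ⟨A, hA, hcard, rfl⟩
  rintro x ⟨B, -, -, rfl⟩
  exact sum_nonneg fun k _ => sq_nonneg _

lemma tTail_nonneg : 0 ≤ tTail β θ J j := by
  refine Real.sInf_nonneg ?_
  rintro x ⟨A, -, -, rfl⟩
  exact sum_nonneg fun k _ => sq_nonneg _

lemma tTail_le_sum : tTail β θ J j ≤ ∑ k ∈ range (2 ^ j), β j k ^ 2 := by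
  obtain ⟨A, hA, hcard⟩ := exists_subset_card_eq (s := range (2 ^ j)) (n := NJj θ J j)
    (by rw [card_range]; exact min_le_right _ _)
  exact (tTail_le_sum_sdiff β θ J j hA hcard).trans
    (sum_le_sum_of_subset_of_nonneg sdiff_subset fun k _ _ => sq_nonneg _)

lemma tTail_eq_zero_of_card_support_le
    (h : #{k ∈ range (2 ^ j) | β j k ≠ 0} ≤ NJj θ J j) : tTail β θ J j = 0 := by
  obtain ⟨A, hsupp, hA, hcard⟩ := exists_subsuperset_card_eq (filter_subset _ _) h
    (by rw [card_range]; exact min_le_right _ _)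
  refine le_antisymm ((tTail_le_sum_sdiff β θ J j hA hcard).trans_eq ?_) (tTail_nonneg β θ J j)
  refine sum_eq_zero fun k hk => ?_
  obtain ⟨hk, hkA⟩ := mem_sdiff.1 hk
  have : β j k = 0 := by
    by_contra hne
    exact hkA (hsupp (mem_filter.2 ⟨hk, hne⟩))
  simp [this]

end tTail

lemma one_le_NJj {θ : ℝ} (hθ : 0 < θ) {J j : ℕ} (hJj : J ≤ j)
    (h : (j : ℝ) - J + 1 ≤ (2 : ℝ) ^ ((J : ℝ) / θ)) : 1 ≤ NJj θ J j := by
  have hm : (0 : ℝ) < (j : ℝ) - J + 1 := by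
    have : (J : ℝ) ≤ j := Nat.cast_le.2 hJj
    linarith
  have hpow : ((j : ℝ) - J + 1) ^ θ ≤ (2 : ℝ) ^ J := by
    calc ((j : ℝ) - J + 1) ^ θ ≤ ((2 : ℝ) ^ ((J : ℝ) / θ)) ^ θ :=
          Real.rpow_le_rpow hm.le h hθ.le
      _ = (2 : ℝ) ^ J := by
          rw [← Real.rpow_mul zero_le_two, div_mul_cancel₀ _ hθ.ne', Real.rpow_natCast]
  have hone : (1 : ℝ) ≤ (2 : ℝ) ^ J * ((j : ℝ) - J + 1) ^ (-θ) := by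
    rw [Real.rpow_neg hm.le, ← div_eq_mul_inv, one_le_div (Real.rpow_pos_of_pos hm θ)]
    exact hpow
  exact le_min (Nat.le_floor (by exact_mod_cast hone)) (Nat.one_le_two_pow)

noncomputable def levelSpike (r : ℝ) (j k : ℕ) : ℝ :=
  if k = 0 then √(r ^ j) else 0

section levelSpike

variable {r : ℝ}

lemma sum_sq_levelSpike (hr : 0 ≤ r) (j : ℕ) :
    ∑ k ∈ range (2 ^ j), levelSpike r j k ^ 2 = r ^ j := by
  rw [sum_eq_single_of_mem 0 (mem_range.2 (Nat.two_pow_pos j))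
    fun k _ hk => by simp [levelSpike, hk]]
  simp [levelSpike, Real.sq_sqrt (pow_nonneg hr j)]

lemma sqSummable_levelSpike (h0 : 0 ≤ r) (h1 : r < 1) : SqSummable (levelSpike r) := by
  simpa only [SqSummable, sum_sq_levelSpike h0] using summable_geometric_of_lt_one h0 h1

lemma tsum_tail_sum_sq_levelSpike (h0 : 0 ≤ r) (h1 : r < 1) (J : ℕ) :
    ∑' j : ℕ, (if J ≤ j then ∑ k ∈ range (2 ^ j), levelSpike r j k ^ 2 else 0)
      = r ^ J * (1 - r)⁻¹ := by
  simp only [sum_sq_levelSpike h0]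
  exact tsum_ite_le_geometric h0 h1 J

lemma tTail_levelSpike_eq_zero {θ : ℝ} {J j : ℕ} (h : 1 ≤ NJj θ J j) :
    tTail (levelSpike r) θ J j = 0 := by
  refine tTail_eq_zero_of_card_support_le _ _ _ _ (le_trans ?_ h)
  refine card_le_one.2 fun a ha b hb => ?_
  have hzero : ∀ k ∈ {k ∈ range (2 ^ j) | levelSpike r j k ≠ 0}, k = 0 := fun k hk => by
    by_contra hk0
    exact (mem_filter.1 hk).2 (if_neg hk0)
  rw [hzero a ha, hzero b hb]

lemma tsum_tTail_levelSpike_le (h0 : 0 ≤ r) (h1 : r < 1) {θ : ℝ} (hθ : 0 < θ) (J : ℕ) :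
    ∑' j : ℕ, (if J ≤ j then tTail (levelSpike r) θ J j else 0)
      ≤ r ^ (J + ⌊(2 : ℝ) ^ ((J : ℝ) / θ)⌋₊) * (1 - r)⁻¹ := by
  set M := J + ⌊(2 : ℝ) ^ ((J : ℝ) / θ)⌋₊
  have hle : ∀ j : ℕ, (if J ≤ j then tTail (levelSpike r) θ J j else 0)
      ≤ if M ≤ j then r ^ j else 0 := fun j => by
    by_cases hJj : J ≤ j
    · by_cases hMj : M ≤ j
      · simpa only [if_pos hJj, if_pos hMj, sum_sq_levelSpike h0] using
          tTail_le_sum (levelSpike r) θ J j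
      · rw [if_pos hJj, if_neg hMj, tTail_levelSpike_eq_zero (one_le_NJj hθ hJj ?_)]
        have hfloor : (j : ℝ) + 1 ≤ J + ⌊(2 : ℝ) ^ ((J : ℝ) / θ)⌋₊ := by
          exact_mod_cast (by omega : j + 1 ≤ M)
        linarith [Nat.floor_le (Real.rpow_nonneg zero_le_two ((J : ℝ) / θ))]
    · rw [if_neg hJj]
      split_ifs <;> positivity
  have hnonneg : ∀ j : ℕ, 0 ≤ if J ≤ j then tTail (levelSpike r) θ J j else 0 := fun j => by
    split_ifs
    exacts [tTail_nonneg _ _ _ _, le_rfl]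
  rw [← tsum_ite_le_geometric h0 h1 M]
  have hsum := summable_ite_le_geometric h0 h1 M
  exact (hsum.of_nonneg_of_le hnonneg hle).tsum_le_tsum hle hsum

end levelSpike

lemma not_condB2_levelSpike {α : ℝ} (hα : 0 < α) :
    ¬ CondB2 (levelSpike ((2 : ℝ) ^ (-(α / (1 + 2 * α))))) α := by
  set c := α / (1 + 2 * α)
  have hc : 0 < c := by positivity
  set r : ℝ := (2 : ℝ) ^ (-c)
  have hr1 : r < 1 := Real.rpow_lt_one_of_one_lt_of_neg one_lt_two (neg_neg_of_pos hc)
  have h1r : 0 < 1 - r := by linarith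
  rintro ⟨C, hC⟩
  obtain ⟨J, hJ⟩ := pow_unbounded_of_one_lt (C * (1 - r)) (Real.one_lt_rpow one_lt_two hc)
  have hgrowth : (2 : ℝ) ^ (2 * (J : ℝ) * α / (1 + 2 * α)) * r ^ J = ((2 : ℝ) ^ c) ^ J := by
    rw [← Real.rpow_mul_natCast zero_le_two, ← Real.rpow_mul_natCast zero_le_two,
      ← Real.rpow_add two_pos]
    congr 1
    ring
  have hCJ := hC J
  rw [tsum_tail_sum_sq_levelSpike (by positivity) hr1, ← mul_assoc, hgrowth,
    ← div_eq_mul_inv, div_le_iff₀ h1r] at hCJ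
  linarith

lemma condA_levelSpike {c θ : ℝ} (hc : 0 < c) (hθ : 0 < θ) (α : ℝ) :
    CondA (levelSpike ((2 : ℝ) ^ (-c))) α θ := by
  set r : ℝ := (2 : ℝ) ^ (-c)
  have hr1 : r < 1 := Real.rpow_lt_one_of_one_lt_of_neg one_lt_two (neg_neg_of_pos hc)
  obtain ⟨D, hD⟩ := exists_mul_le_mul_exp_add (2 * α) hc (div_pos (Real.log_pos one_lt_two) hθ)
  refine ⟨(2 : ℝ) ^ (D + c) * (1 - r)⁻¹, fun J => ?_⟩
  set x : ℝ := (2 : ℝ) ^ ((J : ℝ) / θ) with hx_def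
  set M := J + ⌊x⌋₊
  have hx : x = Real.exp (Real.log 2 / θ * J) := by
    rw [hx_def, Real.rpow_def_of_pos two_pos]
    ring_nf
  have hexponent : 2 * (J : ℝ) * α + -c * M ≤ D + c := by
    have hM : x - 1 ≤ M := by
      have := Nat.sub_one_lt_floor x
      push_cast [M]
      linarith [(Nat.cast_nonneg J : (0 : ℝ) ≤ J)]
    have hDJ := hD J (Nat.cast_nonneg J)
    rw [← hx] at hDJ
    nlinarith
  calc (2 : ℝ) ^ (2 * (J : ℝ) * α) *
        ∑' j : ℕ, (if J ≤ j then tTail (levelSpike r) θ J j else 0)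
      ≤ (2 : ℝ) ^ (2 * (J : ℝ) * α) * (r ^ M * (1 - r)⁻¹) := by
        gcongr
        exact tsum_tTail_levelSpike_le (by positivity) hr1 hθ J
    _ = (2 : ℝ) ^ (2 * (J : ℝ) * α + -c * M) * (1 - r)⁻¹ := by
        rw [← Real.rpow_mul_natCast zero_le_two, Real.rpow_add two_pos]
        ring
    _ ≤ (2 : ℝ) ^ (D + c) * (1 - r)⁻¹ := by
        gcongr
        linarith

/-- the non-embedding `A^α_θ ⊄ B^{α/(1+2α)}_{2,∞} ∩ W_{2/(1+2α)}`. -/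
theorem stmt_17 (α θ : ℝ) (hα : 0 < α) (hθ : 2 < θ) :
    (∃ β : ℕ → ℕ → ℝ, SqSummable β ∧ CondA β α θ ∧ ¬ CondB2 β α) ∧
      ¬ (∀ β : ℕ → ℕ → ℝ, SqSummable β → CondA β α θ → CondB2 β α ∧ CondW β α) := by
  have hc : 0 < α / (1 + 2 * α) := by positivity
  set β := levelSpike ((2 : ℝ) ^ (-(α / (1 + 2 * α))))
  have hsq : SqSummable β := sqSummable_levelSpike (by positivity)
    (Real.rpow_lt_one_of_one_lt_of_neg one_lt_two (neg_neg_of_pos hc))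
  have hA : CondA β α θ := condA_levelSpike hc (by linarith) α
  have hB : ¬ CondB2 β α := not_condB2_levelSpike hα
  exact ⟨⟨β, hsq, hA, hB⟩, fun h => hB (h β hsq hA).1⟩
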